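/- arXiv:1603.04560 — 5 statements merged into one kernel-verified Lean document; each statement's English description precedes it below -/
import Mathlib

section
/- Let q ∈ (0,1), τ, δ ∈ ℝ with τ² − 4δ < 0 and τ ≥ 0. The complex roots λ± = (τ ± i√(4δ−τ²))/2 of λ² − τλ + δ = 0 satisfy |arg(λ±)| > qπ/2 if and only if 4δ > τ²·sec²(qπ/2). -/
open Real Complex
open ComplexConjugate

/-!
The two roots are complex conjugates, so they have the same `|arg|`, and `λ₊` lies in the open upper half
plane. For `0 ≤ θ < π/2` and `z` in the upper half plane, `θ < arg z` exactly when
`re z · tan θ < im z` (compare slopes when `re z > 0`; both sides hold when `re z ≤ 0`).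
With `re λ₊ = τ/2` and `im λ₊ = √(4δ - τ²)/2` this reads `τ tan θ < √(4δ - τ²)`, i.e.
`τ² (1 + tan² θ) < 4δ`, and `1 + tan² θ = sec² θ`.
-/

namespace Complex

theorem abs_arg_conj (z : ℂ) : |arg (conj z)| = |arg z| := by
  rw [arg_conj]
  split_ifs with h <;> simp [h]

theorem lt_arg_iff_re_mul_tan_lt_im {z : ℂ} {θ : ℝ} (hz : 0 < z.im) (hθ₀ : 0 ≤ θ)
    (hθ : θ < π / 2) : θ < arg z ↔ z.re * Real.tan θ < z.im := by
  have htan : 0 ≤ Real.tan θ := tan_nonneg_of_nonneg_of_le_pi_div_two hθ₀ hθ.le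
  rcases le_or_gt z.re 0 with hre | hre
  · have harg : π / 2 ≤ arg z := by
      refine le_of_not_gt fun h => ?_
      rcases arg_lt_pi_div_two_iff.mp h with h | h | rfl
      · exact hre.not_gt h
      · exact h.not_gt hz
      · simp at hz
    exact iff_of_true (hθ.trans_le harg) ((mul_nonpos_of_nonpos_of_nonneg hre htan).trans_lt hz)
  · have harg : |arg z| < π / 2 := abs_arg_lt_pi_div_two_iff.mpr (Or.inl hre)
    rw [← strictMonoOn_tan.lt_iff_lt ⟨by linarith [pi_pos], hθ⟩ (abs_lt.mp harg), tan_arg,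
      lt_div_iff₀ hre, mul_comm]

end Complex

theorem complex_roots_arg (q τ δ : ℝ) (hq0 : 0 < q) (hq1 : q < 1)
    (hdisc : τ ^ 2 - 4 * δ < 0) (hτ : τ ≥ 0)
    (lp lm : ℂ)
    (hlp : lp = (↑τ + Complex.I * Real.sqrt (4 * δ - τ ^ 2)) / 2)
    (hlm : lm = (↑τ - Complex.I * Real.sqrt (4 * δ - τ ^ 2)) / 2) :
    (|lp.arg| > q * π / 2 ∧ |lm.arg| > q * π / 2) ↔
      4 * δ > τ ^ 2 * (1 / Real.cos (q * π / 2)) ^ 2 := by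
  have hθ : q * π / 2 < π / 2 := by nlinarith [pi_pos]
  set θ := q * π / 2
  have hθ₀ : 0 ≤ θ := by positivity
  have hcos : Real.cos θ ≠ 0 := (cos_pos_of_mem_Ioo ⟨by linarith, hθ⟩).ne'
  have hsec : (1 / Real.cos θ) ^ 2 = 1 + Real.tan θ ^ 2 := by
    rw [div_pow, one_pow, one_div, ← inv_one_add_tan_sq hcos, inv_inv]
  have hconj : lm = conj lp := by
    rw [hlp, hlm]
    simp only [map_div₀, map_add, map_mul, conj_I, conj_ofReal, map_ofNat]
    ring
  have hre : lp.re = τ / 2 := by simp [hlp]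
  have him : lp.im = √(4 * δ - τ ^ 2) / 2 := by simp [hlp]
  have him_pos : 0 < lp.im := by rw [him]; exact half_pos (sqrt_pos.mpr (by linarith))
  rw [hconj, abs_arg_conj, and_self, gt_iff_lt, abs_of_nonneg (arg_nonneg_iff.mpr him_pos.le),
    lt_arg_iff_re_mul_tan_lt_im him_pos hθ₀ hθ, hre, him, div_mul_eq_mul_div,
    div_lt_div_iff_of_pos_right two_pos,
    lt_sqrt (mul_nonneg hτ (tan_nonneg_of_nonneg_of_le_pi_div_two hθ₀ hθ.le)), hsec]
  constructor <;> intro h <;> linarith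
end

section
/- Let q ∈ (0,1) and A a real 2×2 matrix with trace τ and determinant δ. Both (complex) eigenvalues λ of A satisfy |arg(λ)| > qπ/2 if and only if either (i) τ < 0 and δ > 0, or (ii) τ ≥ 0 and δ > (τ²/4)·sec²(qπ/2). -/
/-!
The eigenvalues are the roots of `z² - τ z + δ`. If `τ² ≥ 4δ` they are real, and for a real
number `|arg r| > qπ/2` just says `r < 0`; both roots are negative iff `τ < 0 < δ`. If `τ² < 4δ`
they are `(τ ± i√(4δ - τ²))/2`, with real part `τ/2` and modulus `√δ`; as `cos` is decreasing on
`[0, π]`, the condition reads `τ/2 < √δ cos(qπ/2)`, which is (i) or (ii).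
-/

open Real Complex

lemma Matrix.isRoot_charpoly_map_ofReal_iff (A : Matrix (Fin 2) (Fin 2) ℝ) (z : ℂ) :
    (A.map ofReal).charpoly.IsRoot z ↔ z ^ 2 - A.trace * z + A.det = 0 := by
  simp [Matrix.charpoly_fin_two, Matrix.trace_fin_two, Matrix.det_fin_two]

lemma sq_sub_mul_add_eq_zero_iff {K : Type*} [Field K] [NeZero (2 : K)] {τ δ s : K}
    (hs : s ^ 2 = τ ^ 2 - 4 * δ) (z : K) :
    z ^ 2 - τ * z + δ = 0 ↔ z = (τ + s) / 2 ∨ z = (τ - s) / 2 := by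
  have h := quadratic_eq_zero_iff one_ne_zero (b := -τ) (c := δ) (s := s)
    (by rw [discrim]; linear_combination -hs) z
  simpa [sq, sub_eq_add_neg] using h

namespace Complex

lemma lt_abs_arg_iff_re_lt {θ : ℝ} (h0 : 0 ≤ θ) (hπ : θ ≤ π) {z : ℂ} (hz : z ≠ 0) :
    θ < |z.arg| ↔ z.re < ‖z‖ * Real.cos θ := by
  rw [← Real.strictAntiOn_cos.lt_iff_gt ⟨abs_nonneg _, abs_arg_le_pi z⟩ ⟨h0, hπ⟩,
    Real.cos_abs, cos_arg hz, div_lt_iff₀ (norm_pos_iff.mpr hz), mul_comm]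

lemma lt_abs_arg_ofReal_iff {θ : ℝ} (h0 : 0 ≤ θ) (hπ : θ < π) (r : ℝ) :
    θ < |arg (r : ℂ)| ↔ r < 0 := by
  rcases lt_or_ge r 0 with hr | hr
  · simp [arg_ofReal_of_neg hr, abs_of_pos pi_pos, hπ, hr]
  · simp [arg_ofReal_of_nonneg hr, not_lt.mpr h0, not_lt.mpr hr]

end Complex

lemma forall_quadratic_roots_lt_abs_arg_iff_of_discrim_nonneg {θ : ℝ} (h0 : 0 ≤ θ) (hπ : θ < π)
    {τ δ : ℝ} (hD : 4 * δ ≤ τ ^ 2) :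
    (∀ z : ℂ, z ^ 2 - τ * z + δ = 0 → θ < |arg z|) ↔ τ < 0 ∧ 0 < δ := by
  set s := √(τ ^ 2 - 4 * δ)
  have hs : s ^ 2 = τ ^ 2 - 4 * δ := sq_sqrt (by linarith)
  have hroots (z : ℂ) :
      z ^ 2 - τ * z + δ = 0 ↔ z = ((τ + s) / 2 : ℝ) ∨ z = ((τ - s) / 2 : ℝ) := by
    push_cast
    exact sq_sub_mul_add_eq_zero_iff (by exact_mod_cast hs) z
  simp only [hroots, forall_eq_or_imp, forall_eq, lt_abs_arg_ofReal_iff h0 hπ]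
  have hs0 : 0 ≤ s := sqrt_nonneg _
  constructor
  · rintro ⟨hplus, -⟩
    have hτ : τ < 0 := by linarith
    refine ⟨hτ, ?_⟩
    have : s < -τ := by linarith
    rw [sqrt_lt' (by linarith)] at this
    linarith
  · rintro ⟨hτ, hδ⟩
    have : s < -τ := (sqrt_lt' (by linarith)).mpr (by linarith)
    constructor <;> linarith

lemma forall_quadratic_roots_lt_abs_arg_iff_of_discrim_neg {θ : ℝ} (h0 : 0 ≤ θ) (hπ : θ ≤ π)
    {τ δ : ℝ} (hD : τ ^ 2 < 4 * δ) :
    (∀ z : ℂ, z ^ 2 - τ * z + δ = 0 → θ < |arg z|) ↔ τ / 2 < √δ * Real.cos θ := by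
  set y := √(4 * δ - τ ^ 2)
  have hy : y ^ 2 = 4 * δ - τ ^ 2 := sq_sqrt (by linarith)
  have hy0 : 0 < y := sqrt_pos.mpr (by linarith)
  have hroot (z : ℂ) (hz : z = (τ + I * y) / 2 ∨ z = (τ - I * y) / 2) :
      θ < |arg z| ↔ τ / 2 < √δ * Real.cos θ := by
    have hre : z.re = τ / 2 := by rcases hz with rfl | rfl <;> simp
    have him : z.im ^ 2 = y ^ 2 / 4 := by rcases hz with rfl | rfl <;> simp <;> ring
    have hz0 : z ≠ 0 := by
      rintro rfl
      simp only [zero_im] at him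
      nlinarith
    have hnorm : ‖z‖ = √δ := by
      rw [norm_def, normSq_apply, hre, ← sq z.im, him, hy]
      ring_nf
    rw [lt_abs_arg_iff_re_lt h0 hπ hz0, hre, hnorm]
  have hroots (z : ℂ) :
      z ^ 2 - τ * z + δ = 0 ↔ z = (τ + I * y) / 2 ∨ z = (τ - I * y) / 2 :=
    have hy' : (y : ℂ) ^ 2 = 4 * δ - τ ^ 2 := by exact_mod_cast hy
    sq_sub_mul_add_eq_zero_iff (by linear_combination (y : ℂ) ^ 2 * I_sq - hy') z
  simp only [hroots]
  exact ⟨fun h => (hroot _ (.inl rfl)).mp (h _ (.inl rfl)), fun h z hz => (hroot z hz).mpr h⟩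

lemma forall_quadratic_roots_lt_abs_arg_iff {θ : ℝ} (h0 : 0 < θ) (hθ : θ < π / 2) (τ δ : ℝ) :
    (∀ z : ℂ, z ^ 2 - τ * z + δ = 0 → θ < |arg z|) ↔
      (τ < 0 ∧ 0 < δ) ∨ (0 ≤ τ ∧ τ ^ 2 / 4 < δ * Real.cos θ ^ 2) := by
  have hc : 0 < Real.cos θ := cos_pos_of_mem_Ioo ⟨by linarith, hθ⟩
  rcases le_or_gt (4 * δ) (τ ^ 2) with hD | hD
  · rw [forall_quadratic_roots_lt_abs_arg_iff_of_discrim_nonneg h0.le (by linarith) hD]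
    have : δ * Real.cos θ ^ 2 ≤ τ ^ 2 / 4 := by
      nlinarith [cos_sq_le_one θ, sq_nonneg (Real.cos θ), sq_nonneg τ]
    constructor
    · exact .inl
    · rintro (h | ⟨-, h⟩)
      · exact h
      · linarith
  · rw [forall_quadratic_roots_lt_abs_arg_iff_of_discrim_neg h0.le (by linarith) hD]
    have hδ : 0 < δ := by nlinarith [sq_nonneg τ]
    rcases lt_or_ge τ 0 with hτ | hτ
    · simp only [hτ, hδ, and_self, true_or, iff_true]
      nlinarith [mul_pos (sqrt_pos.mpr hδ) hc]
    · have hsq : √δ * Real.cos θ = √(δ * Real.cos θ ^ 2) := by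
        rw [sqrt_mul hδ.le, sqrt_sq hc.le]
      rw [hsq, lt_sqrt (by positivity), div_pow]
      norm_num [hτ, not_lt.mpr hτ]

theorem matrix_eigen_arg (q : ℝ) (hq0 : 0 < q) (hq1 : q < 1)
    (A : Matrix (Fin 2) (Fin 2) ℝ) (τ δ : ℝ)
    (hτ : τ = A.trace) (hδ : δ = A.det) :
    (∀ lam : ℂ, (A.map (Complex.ofReal)).charpoly.IsRoot lam → |lam.arg| > q * π / 2) ↔
      ((τ < 0 ∧ δ > 0) ∨ (τ ≥ 0 ∧ δ > τ ^ 2 / 4 * (1 / Real.cos (q * π / 2)) ^ 2)) := by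
  have hθ0 : 0 < q * π / 2 := by positivity
  have hθ : q * π / 2 < π / 2 := by nlinarith [pi_pos]
  have hc : 0 < Real.cos (q * π / 2) := cos_pos_of_mem_Ioo ⟨by linarith, hθ⟩
  simp only [A.isRoot_charpoly_map_ofReal_iff, ← hτ, ← hδ, gt_iff_lt, ge_iff_le,
    forall_quadratic_roots_lt_abs_arg_iff hθ0 hθ, one_div, inv_pow, ← div_eq_mul_inv,
    div_lt_iff₀ (pow_pos hc 2)]
end

section
/- Let q ∈ (0,1), a, b, d > 0, x* ∈ ℝ with x* < min{0, 2(b−d)/(3a)}. Then both eigenvalues λ of the 2×2 matrix A = [[−3a(x*)² + 2b x*, 1], [−2d x*, −1]] satisfy |arg(λ)| > qπ/2. -/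
open Real Complex

theorem first_branch_stable (q a b d : ℝ) (hq0 : 0 < q) (hq1 : q < 1)
    (ha : 0 < a) (hb : 0 < b) (hd : 0 < d)
    (x : ℝ) (hx : x < min 0 (2 * (b - d) / (3 * a)))
    (A : Matrix (Fin 2) (Fin 2) ℝ)
    (hA : A = !![-3 * a * x ^ 2 + 2 * b * x, 1; -2 * d * x, -1]) :
    ∀ lam : ℂ, (A.map (Complex.ofReal)).charpoly.IsRoot lam → |lam.arg| > q * π / 2 := by
  intro lam hroot
  subst hA
  rw [lt_min_iff] at hx
  obtain ⟨hx0, hx2⟩ := hx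
  have h3a : (0:ℝ) < 3 * a := by linarith
  have hxa : 3 * a * x < 2 * (b - d) := by
    have := (lt_div_iff₀ h3a).mp hx2
    linarith
  set τ : ℝ := -3 * a * x ^ 2 + 2 * b * x - 1 with hτdef
  set δ : ℝ := 3 * a * x ^ 2 - 2 * (b - d) * x with hδdef
  have hτ : τ < 0 := by nlinarith [mul_pos ha (mul_pos (neg_pos.mpr hx0) (neg_pos.mpr hx0))]
  have hδ : 0 < δ := by nlinarith [mul_pos_of_neg_of_neg hx0 (sub_neg.mpr hxa)]
  have hfin : ∀ M : Matrix (Fin 2) (Fin 2) ℂ, M.charpoly =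
      Polynomial.X ^ 2 - Polynomial.C M.trace * Polynomial.X + Polynomial.C M.det := by
    intro M
    rw [Matrix.charpoly, Matrix.det_fin_two, Matrix.charmatrix_apply_eq,
      Matrix.charmatrix_apply_eq, Matrix.charmatrix_apply_ne _ _ _ (by decide),
      Matrix.charmatrix_apply_ne _ _ _ (by decide), Matrix.trace_fin_two, Matrix.det_fin_two]
    simp only [map_add, map_mul, map_sub]
    ring
  have key : lam ^ 2 - (τ : ℂ) * lam + (δ : ℂ) = 0 := by
    have h := hroot
    rw [hfin] at h
    simp [Polynomial.IsRoot, Matrix.trace_fin_two, Matrix.det_fin_two, Matrix.map_apply] at h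
    rw [hτdef, hδdef]
    push_cast
    linear_combination h
  have hre : lam.re < 0 := by
    have hR := congrArg Complex.re key
    have hI := congrArg Complex.im key
    simp [Complex.add_re, Complex.sub_re, Complex.mul_re, Complex.mul_im, pow_two] at hR hI
    by_contra hge
    push_neg at hge
    rcases mul_eq_zero.mp (by linarith [hI] : lam.im * (2 * lam.re - τ) = 0) with hv | hu
    · nlinarith [hR, mul_nonneg hge hge]
    · nlinarith
  have hne : lam ≠ 0 := by
    intro h; rw [h] at hre; simp at hre
  have habs : π / 2 ≤ |lam.arg| := by
    by_contra hlt
    push_neg at hlt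
    rcases (Complex.abs_arg_lt_pi_div_two_iff).mp hlt with h | h
    · linarith
    · exact hne h
  have : q * π / 2 < π / 2 := by
    have hπ := Real.pi_pos
    nlinarith
  linarith
end

section
/- Under assumption (b−d)² < 3as with a, s > 0, for every r ∈ ℝ the system x³ − px² + (s/a)(x − x₀) = r, y = c − dx², z = s(x − x₀) (where p = (b−d)/a) has exactly one solution (x, y, z) ∈ ℝ³. -/
/-!
An equilibrium is determined by its `x`-coordinate, which must solve `f x = r` for the cubic
`f x = x³ - p x² + (s/a)(x - x₀)`. Every real monic cubic is continuous and tends to `±∞` at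
`±∞`, hence surjective; and `x³ + b x² + c x + e` is strictly increasing as soon as
`b² < 3c`, the condition that here reads `(b - d)² < 3as`.
-/

open Filter Polynomial

theorem tendsto_cubic_atTop (b c e : ℝ) :
    Tendsto (fun x : ℝ => x ^ 3 + b * x ^ 2 + c * x + e) atTop atTop := by
  set P : ℝ[X] := X ^ 3 + C b * X ^ 2 + C c * X + C e
  have hdeg : 0 < P.degree := by
    rw [← natDegree_pos_iff_degree_pos, show P.natDegree = 3 by unfold P; compute_degree!]
    norm_num
  have hlead : P.leadingCoeff = 1 := by unfold P; monicity!
  convert P.tendsto_atTop_of_leadingCoeff_nonneg hdeg (by rw [hlead]; exact zero_le_one) using 1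
  ext x
  simp [P]

theorem tendsto_cubic_atBot (b c e : ℝ) :
    Tendsto (fun x : ℝ => x ^ 3 + b * x ^ 2 + c * x + e) atBot atBot := by
  have h := (tendsto_cubic_atTop (-b) c (-e)).comp tendsto_neg_atBot_atTop
  convert tendsto_neg_atTop_atBot.comp h using 1
  ext x; simp only [Function.comp_apply]; ring

theorem cubic_surjective (b c e : ℝ) :
    Function.Surjective fun x : ℝ => x ^ 3 + b * x ^ 2 + c * x + e :=
  (by fun_prop : Continuous fun x : ℝ => x ^ 3 + b * x ^ 2 + c * x + e).surjective
    (tendsto_cubic_atTop b c e) (tendsto_cubic_atBot b c e)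

theorem cubic_strictMono {b c : ℝ} (h : b ^ 2 < 3 * c) (e : ℝ) :
    StrictMono fun x : ℝ => x ^ 3 + b * x ^ 2 + c * x + e := by
  intro x y hxy
  have hfactor : (y ^ 3 + b * y ^ 2 + c * y + e) - (x ^ 3 + b * x ^ 2 + c * x + e)
      = (y - x) * (x ^ 2 + x * y + y ^ 2 + b * (x + y) + c) := by ring
  -- `x² + xy + y² = (3(x + y)² + (x - y)²) / 4`, so the second factor is at least `c - b² / 3`
  have hpos : 0 < x ^ 2 + x * y + y ^ 2 + b * (x + y) + c := by
    nlinarith [sq_nonneg (x - y), sq_nonneg (3 * (x + y) + 2 * b)]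
  dsimp only
  linarith [mul_pos (sub_pos.mpr hxy) hpos]

theorem cubic_bijective {b c : ℝ} (h : b ^ 2 < 3 * c) (e : ℝ) :
    Function.Bijective fun x : ℝ => x ^ 3 + b * x ^ 2 + c * x + e :=
  ⟨(cubic_strictMono h e).injective, cubic_surjective b c e⟩

theorem existsUnique_prod_graph {α β γ : Type*} {P : α → Prop} (h : ∃! x, P x)
    (g : α → β) (k : α → γ) :
    ∃! u : α × β × γ, P u.1 ∧ u.2.1 = g u.1 ∧ u.2.2 = k u.1 := by
  obtain ⟨x, hx, huniq⟩ := h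
  refine ⟨(x, g x, k x), ⟨hx, rfl, rfl⟩, ?_⟩
  rintro ⟨y, v, w⟩ ⟨hy, hv, hw⟩
  obtain rfl := huniq y hy
  simp_all

theorem unique_equilibrium_general (a c d s b x₀ : ℝ) (ha : 0 < a)
    (hA : (b - d) ^ 2 < 3 * a * s)
    (p : ℝ) (hp : p = (b - d) / a) (r : ℝ) :
    ∃! u : ℝ × ℝ × ℝ,
      u.1 ^ 3 - p * u.1 ^ 2 + s / a * (u.1 - x₀) = r ∧
      u.2.1 = c - d * u.1 ^ 2 ∧
      u.2.2 = s * (u.1 - x₀) := by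
  have hdisc : (-p) ^ 2 < 3 * (s / a) := by
    rw [hp, neg_sq, div_pow, div_lt_iff₀ (by positivity)]
    calc (b - d) ^ 2 < 3 * a * s := hA
      _ = 3 * (s / a) * a ^ 2 := by field_simp
  have hbij := cubic_bijective hdisc (-(s / a * x₀))
  refine existsUnique_prod_graph (P := fun x => x ^ 3 - p * x ^ 2 + s / a * (x - x₀) = r) ?_
    (fun x => c - d * x ^ 2) (fun x => s * (x - x₀))
  convert hbij.existsUnique r using 3 with x
  ring

theorem unique_equilibrium (a c d s b x₀ : ℝ) (ha : 0 < a) (hc : 0 < c) (hd : 0 < d)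
    (hs : 0 < s) (hA : (b - d) ^ 2 < 3 * a * s)
    (p : ℝ) (hp : p = (b - d) / a) (r : ℝ) :
    ∃! u : ℝ × ℝ × ℝ,
      u.1 ^ 3 - p * u.1 ^ 2 + s / a * (u.1 - x₀) = r ∧
      u.2.1 = c - d * u.1 ^ 2 ∧
      u.2.2 = s * (u.1 - x₀) :=
  unique_equilibrium_general a c d s b x₀ ha hA p hp r
end

section
/- Let q ∈ (0,1), ε ∈ (0,1), s > 0, τ ≤ −1, δ ≥ 0, and P(λ) = λ³ + (ε − τ)λ² + (δ − ετ + εs)λ + ε(δ + s). Then P(τ − ε) < 0; consequently P has a real root λ₁ ∈ (τ − ε, −ε), and the remaining two roots λ₂, λ₃ satisfy λ₂ + λ₃ = τ − ε − λ₁ < 0 and λ₂λ₃ = −ε(δ + s)/λ₁ > 0, hence Re(λ₂) < 0 and Re(λ₃) < 0. Therefore all three roots λ of P satisfy |arg(λ)| > qπ/2. -/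
open Real Complex

lemma quad_root_re_neg {B C : ℝ} (hB : 0 < B) (hC : 0 < C) {z : ℂ}
    (hz : z ^ 2 + (B : ℂ) * z + (C : ℂ) = 0) : z.re < 0 := by
  have hre := congrArg Complex.re hz
  have him := congrArg Complex.im hz
  simp [Complex.add_re, Complex.add_im, Complex.mul_re, Complex.mul_im, pow_two] at hre him
  rcases eq_or_ne z.im 0 with h0 | h0
  · rw [h0] at hre
    nlinarith [sq_nonneg z.re]
  · have hre2 : z.re = -B / 2 := by
      have h : z.im * (z.re + z.re + B) = 0 := by nlinarith [him]
      rcases mul_eq_zero.1 h with h | h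
      · exact absurd h h0
      · linarith
    rw [hre2]; linarith

set_option maxHeartbeats 1000000 in
theorem stability_3d (q ε s τ δ : ℝ) (hq0 : 0 < q) (hq1 : q < 1)
    (hε0 : 0 < ε) (hε1 : ε < 1) (hs : 0 < s) (hτ : τ ≤ -1) (hδ : 0 ≤ δ)
    (P : ℝ → ℝ)
    (hP : ∀ lam, P lam = lam ^ 3 + (ε - τ) * lam ^ 2 + (δ - ε * τ + ε * s) * lam
      + ε * (δ + s)) :
    P (τ - ε) < 0 ∧
      (∃ lam₁ ∈ Set.Ioo (τ - ε) (-ε), P lam₁ = 0) ∧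
      (∀ lam₁ : ℝ, lam₁ ∈ Set.Ioo (τ - ε) (-ε) → P lam₁ = 0 →
        ∀ lam₂ lam₃ : ℂ,
          (∀ z : ℂ, z ^ 3 + (↑ε - ↑τ) * z ^ 2 + (↑δ - ↑ε * ↑τ + ↑ε * ↑s) * z
              + ↑ε * (↑δ + ↑s) = (z - ↑lam₁) * (z - lam₂) * (z - lam₃)) →
          lam₂ + lam₃ = ↑(τ - ε - lam₁) ∧ (lam₂ + lam₃).re < 0 ∧
            lam₂ * lam₃ = ↑(-ε * (δ + s) / lam₁) ∧ lam₂.re < 0 ∧ lam₃.re < 0) ∧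
      (∀ lam : ℂ, lam ^ 3 + (↑ε - ↑τ) * lam ^ 2 + (↑δ - ↑ε * ↑τ + ↑ε * ↑s) * lam
          + ↑ε * (↑δ + ↑s) = 0 → |lam.arg| > q * π / 2) := by
  have hπ := Real.pi_pos
  have hτ0 : τ < 0 := by linarith
  -- Part 1
  have hPτε : P (τ - ε) < 0 := by
    rw [hP]
    nlinarith [mul_pos hε0 hs, mul_nonneg hδ (by linarith : (0:ℝ) ≤ -τ),
      mul_nonneg (mul_pos hε0 hs).le (by linarith : (0:ℝ) ≤ -τ - 1),
      mul_nonneg hε0.le (by nlinarith : (0:ℝ) ≤ τ ^ 2 - 1),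
      mul_pos (mul_pos hε0 hε0) hs, mul_pos hε0 hε0]
  -- Part 2
  have hlt : τ - ε < -ε := by linarith
  have hPnegε : 0 < P (-ε) := by rw [hP]; nlinarith [mul_pos hε0 hs]
  have hcont : ContinuousOn P (Set.Icc (τ - ε) (-ε)) := by
    have hPe : P = fun lam => lam ^ 3 + (ε - τ) * lam ^ 2 + (δ - ε * τ + ε * s) * lam
        + ε * (δ + s) := funext hP
    rw [hPe]; fun_prop
  have h2 : ∃ lam₁ ∈ Set.Ioo (τ - ε) (-ε), P lam₁ = 0 := by
    have hIV := intermediate_value_Ioo hlt.le hcont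
    obtain ⟨x, hx, hx0⟩ := hIV ⟨hPτε, hPnegε⟩
    exact ⟨x, hx, hx0⟩
  refine ⟨hPτε, h2, ?_, ?_⟩
  · -- Part 3
    intro a ha haP b c hfac
    have ha0 : a < 0 := by have := ha.2; linarith
    have hane : (a : ℂ) ≠ 0 := by exact_mod_cast ha0.ne
    have h1 := hfac 1
    have hm1 := hfac (-1)
    have h0 := hfac 0
    have hsum : b + c = ((τ - ε - a : ℝ) : ℂ) := by
      push_cast
      linear_combination (h1 + hm1) / 2 - h0
    have hprod : b * c = ((-ε * (δ + s) / a : ℝ) : ℂ) := by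
      have hbc : (a : ℂ) * (b * c) = ((-ε * (δ + s) : ℝ) : ℂ) := by
        push_cast
        linear_combination h0
      push_cast at hbc ⊢
      field_simp
      linear_combination hbc
    have hsumre : (b + c).re < 0 := by
      rw [hsum, Complex.ofReal_re]; linarith [ha.1]
    have hr : τ - ε - a < 0 := by linarith [ha.1]
    have hp : 0 < -ε * (δ + s) / a := by
      apply div_pos_of_neg_of_neg _ ha0
      nlinarith [mul_pos hε0 hs]
    -- real/imaginary analysis
    have hbim : b.im + c.im = 0 := by
      have := congrArg Complex.im hsum; simpa using this
    have hbre : b.re + c.re = τ - ε - a := by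
      have := congrArg Complex.re hsum; simpa using this
    have hpim : b.re * c.im + b.im * c.re = 0 := by
      have := congrArg Complex.im hprod; simpa [Complex.mul_im] using this
    have hpre : b.re * c.re - b.im * c.im = -ε * (δ + s) / a := by
      have := congrArg Complex.re hprod; simpa [Complex.mul_re] using this
    have hres : b.re < 0 ∧ c.re < 0 := by
      rcases eq_or_ne b.im 0 with h0' | h0'
      · have hcim : c.im = 0 := by linarith
        rw [h0', hcim] at hpre
        constructor <;> nlinarith
      · have hceq : c.re = b.re := by
          have h : b.im * (c.re - b.re) = 0 := by
            have hcim : c.im = -b.im := by linarith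
            rw [hcim] at hpim; nlinarith [hpim]
          rcases mul_eq_zero.1 h with h | h
          · exact absurd h h0'
          · linarith
        have hbr : b.re < 0 := by
          have := ha.1
          rw [hceq] at hbre; linarith
        exact ⟨hbr, hceq ▸ hbr⟩
    exact ⟨hsum, hsumre, hprod, hres.1, hres.2⟩
  · -- Part 4
    intro lam hlam
    obtain ⟨a, ha, haP⟩ := h2
    rw [hP] at haP
    have ha0 : a < 0 := by have := ha.2; linarith
    set B : ℝ := ε - τ + a with hB
    set C : ℝ := δ - ε * τ + ε * s + a * (ε - τ) + a ^ 2 with hC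
    have hBpos : 0 < B := by have := ha.1; simp only [hB]; linarith
    have haC : a * C = -(ε * (δ + s)) := by simp only [hC]; nlinarith [haP]
    have hCpos : 0 < C := by
      have h1 : a * C < 0 := by rw [haC]; nlinarith [mul_pos hε0 hs]
      by_contra h
      push_neg at h
      nlinarith [mul_nonneg (neg_nonneg.2 ha0.le) (neg_nonneg.2 h)]
    have haCc : (a : ℂ) * ((δ : ℂ) - ε * τ + ε * s + a * ((ε : ℂ) - τ) + (a : ℂ) ^ 2)
        = -((ε : ℂ) * (δ + s)) := by
      rw [hC] at haC; exact_mod_cast haC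
    have hfact : (lam - (a : ℂ)) * (lam ^ 2 + (B : ℂ) * lam + (C : ℂ)) = 0 := by
      push_cast [hB, hC]
      linear_combination hlam - haCc
    rcases mul_eq_zero.1 hfact with h | h
    · have hlama : lam = (a : ℂ) := sub_eq_zero.1 h
      rw [hlama, Complex.arg_ofReal_of_neg ha0]
      rw [abs_of_pos hπ]
      nlinarith
    · have hre : lam.re < 0 := quad_root_re_neg hBpos hCpos h
      have : ¬ |lam.arg| < π / 2 := by
        rw [Complex.abs_arg_lt_pi_div_two_iff]
        push_neg
        constructor
        · linarith
        · intro hz; rw [hz] at hre; simp at hre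
      nlinarith [not_lt.1 this]
end
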